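/- arXiv:2103.11370 — 5 statements merged into one kernel-verified Lean document; each statement's English description precedes it below -/
import Mathlib

section
/- For every dimension d ≥ 2, every horizon T ≥ 1, every D > 0 and G > 0, and every deterministic player strategy σ, there exist loss vectors m_1, …, m_T ∈ ℝ^d with ‖m_t‖ = G for all t such that, letting w_t = σ_t(m_1, …, m_{t−1}) be the player's actions, the regret satisfies R = Σ_{t=1}^T ⟨m_t, w_t⟩ − min_{w ∈ 𝒟} ⟨Σ_{t=1}^T m_t, w⟩ ≥ 0.5·D·G·√T. -/
/-!
The adversary plays, at each round, a loss vector of norm `G` orthogonal to the player's action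
(possible since `d ≥ 2`), with the sign chosen so that it makes a nonnegative angle with the sum `S`
of the previous losses. The player then suffers no loss at all, while `‖S‖²` grows by at least `G²`
per round, so `‖S‖ ≥ G √T` and the comparator `-(D/2) S / ‖S‖` has loss `-(D/2) ‖S‖`.
-/

open scoped InnerProductSpace

section

variable {E : Type*} [NormedAddCommGroup E] [InnerProductSpace ℝ E]

lemma exists_ne_zero_inner_eq_zero [FiniteDimensional ℝ E] (hE : 2 ≤ Module.finrank ℝ E) (w : E) :
    ∃ u : E, u ≠ 0 ∧ ⟪u, w⟫_ℝ = 0 := by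
  have hK : (ℝ ∙ w)ᗮ ≠ ⊥ := by
    rw [Ne, Submodule.orthogonal_eq_bot_iff]
    intro htop
    have := finrank_span_le_card (R := ℝ) ({w} : Set E)
    rw [htop, finrank_top] at this
    simp at this
    omega
  obtain ⟨u, hu, hu0⟩ := Submodule.exists_mem_ne_zero_of_ne_bot hK
  exact ⟨u, hu0, Submodule.mem_orthogonal_singleton_iff_inner_left.mp hu⟩

lemma exists_norm_eq_inner_eq_zero_inner_nonneg [FiniteDimensional ℝ E]
    (hE : 2 ≤ Module.finrank ℝ E) {G : ℝ} (hG : 0 ≤ G) (w S : E) :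
    ∃ m : E, ‖m‖ = G ∧ ⟪m, w⟫_ℝ = 0 ∧ 0 ≤ ⟪m, S⟫_ℝ := by
  obtain ⟨u, hu0, huw⟩ := exists_ne_zero_inner_eq_zero hE w
  set v := (G / ‖u‖) • u
  have hv : ‖v‖ = G := by
    rw [norm_smul, Real.norm_of_nonneg (by positivity),
      div_mul_cancel₀ _ (norm_ne_zero_iff.mpr hu0)]
  have hvw : ⟪v, w⟫_ℝ = 0 := by rw [real_inner_smul_left, huw, mul_zero]
  rcases le_total 0 ⟪v, S⟫_ℝ with h | h
  · exact ⟨v, hv, hvw, h⟩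
  · refine ⟨-v, by rwa [norm_neg], by rw [inner_neg_left, hvw, neg_zero], ?_⟩
    rw [inner_neg_left]
    linarith

lemma sum_norm_sq_le_norm_sum_sq (x : ℕ → E)
    (hx : ∀ t, 0 ≤ ⟪x t, ∑ s ∈ Finset.range t, x s⟫_ℝ) (T : ℕ) :
    ∑ t ∈ Finset.range T, ‖x t‖ ^ 2 ≤ ‖∑ t ∈ Finset.range T, x t‖ ^ 2 := by
  induction T with
  | zero => simp
  | succ T ih =>
    rw [Finset.sum_range_succ, Finset.sum_range_succ, norm_add_sq_real, real_inner_comm]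
    linarith [hx T]

lemma iInf_inner_closedBall_le (S : E) {r : ℝ} (hr : 0 ≤ r) :
    ⨅ v : Metric.closedBall (0 : E) r, ⟪S, (v : E)⟫_ℝ ≤ -(r * ‖S‖) := by
  have hbdd : BddBelow (Set.range fun v : Metric.closedBall (0 : E) r => ⟪S, (v : E)⟫_ℝ) := by
    refine ⟨-(‖S‖ * r), ?_⟩
    rintro _ ⟨v, rfl⟩
    have hv : ‖(v : E)‖ ≤ r := mem_closedBall_zero_iff.mp v.2
    nlinarith [neg_abs_le ⟪S, (v : E)⟫_ℝ, abs_real_inner_le_norm S v, norm_nonneg S]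
  set v₀ : E := -((r / ‖S‖) • S)
  have hv₀ : v₀ ∈ Metric.closedBall (0 : E) r := by
    rw [mem_closedBall_zero_iff, norm_neg, norm_smul, Real.norm_eq_abs, abs_div, abs_norm,
      abs_of_nonneg hr]
    rcases eq_or_ne ‖S‖ 0 with h | h
    · simp [h, hr]
    · rw [div_mul_cancel₀ _ h]
  calc ⨅ v : Metric.closedBall (0 : E) r, ⟪S, (v : E)⟫_ℝ ≤ ⟪S, v₀⟫_ℝ := ciInf_le hbdd ⟨v₀, hv₀⟩
    _ = -(r * ‖S‖) := by
      rw [inner_neg_right, real_inner_smul_right, real_inner_self_eq_norm_sq]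
      rcases eq_or_ne ‖S‖ 0 with h | h
      · simp [h]
      · field_simp

end

section

variable {E : Type*} [AddCommMonoid E]

-- Rounds are numbered from `1`, as in `stmt0`; the value at `0` is junk.
noncomputable def adversary (next : E → E → E) (σ : (t : ℕ) → (Fin t → E) → E) : ℕ → E
  | 0 => 0
  | t + 1 => next (σ t fun j => adversary next σ (j + 1)) (∑ j : Fin t, adversary next σ (j + 1))

lemma adversary_succ (next : E → E → E) (σ : (t : ℕ) → (Fin t → E) → E) (t : ℕ) :
    adversary next σ (t + 1) = next (σ t fun j => adversary next σ (j + 1))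
      (∑ s ∈ Finset.range t, adversary next σ (s + 1)) := by
  rw [adversary, Fin.sum_univ_eq_sum_range (fun s => adversary next σ (s + 1))]

end

lemma Finset.sum_Icc_one_eq_sum_range {M : Type*} [AddCommMonoid M] (f : ℕ → M) (T : ℕ) :
    ∑ t ∈ Finset.Icc 1 T, f t = ∑ s ∈ Finset.range T, f (s + 1) := by
  rw [Finset.range_eq_Ico, Finset.sum_Ico_add']
  rfl

theorem stmt0_general (d T : ℕ) (hd : 2 ≤ d) (D G : ℝ) (hD : 0 < D) (hG : 0 < G)
    (σ : (t : ℕ) → (Fin t → EuclideanSpace ℝ (Fin d)) → EuclideanSpace ℝ (Fin d)) :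
    ∃ m : ℕ → EuclideanSpace ℝ (Fin d),
      (∀ t ∈ Finset.Icc 1 T, ‖m t‖ = G) ∧
      (let w : ℕ → EuclideanSpace ℝ (Fin d) :=
        fun t => σ (t - 1) (fun j => m (j.val + 1));
       (∑ t ∈ Finset.Icc 1 T, ⟪m t, w t⟫_ℝ) -
          (⨅ v : Metric.closedBall (0 : EuclideanSpace ℝ (Fin d)) (D / 2),
            ⟪∑ t ∈ Finset.Icc 1 T, m t, (v : EuclideanSpace ℝ (Fin d))⟫_ℝ) ≥
        0.5 * D * G * Real.sqrt T) := by
  have hE : 2 ≤ Module.finrank ℝ (EuclideanSpace ℝ (Fin d)) := by simpa using hd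
  choose next h_norm h_orth h_nonneg using
    exists_norm_eq_inner_eq_zero_inner_nonneg hE hG.le
  set m := adversary next σ
  have hm : ∀ s, m (s + 1) = next (σ s fun j => m (j + 1)) (∑ i ∈ Finset.range s, m (i + 1)) :=
    adversary_succ next σ
  have hm_norm (s : ℕ) : ‖m (s + 1)‖ = G := by rw [hm]; exact h_norm _ _
  refine ⟨m, ?_, ?_⟩
  · intro t ht
    obtain ⟨s, rfl⟩ : ∃ s, t = s + 1 := ⟨t - 1, by grind⟩
    exact hm_norm s
  intro w
  have h_loss : ∑ t ∈ Finset.Icc 1 T, ⟪m t, w t⟫_ℝ = 0 := by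
    rw [Finset.sum_Icc_one_eq_sum_range]
    refine Finset.sum_eq_zero fun s _ => ?_
    rw [hm]
    exact h_orth _ _
  set S := ∑ t ∈ Finset.Icc 1 T, m t
  have h_growth : T * G ^ 2 ≤ ‖S‖ ^ 2 := by
    have h_sum := sum_norm_sq_le_norm_sum_sq (fun s => m (s + 1))
      (fun s => by rw [hm]; exact h_nonneg _ _) T
    have h_norms : ∑ s ∈ Finset.range T, ‖m (s + 1)‖ ^ 2 = T * G ^ 2 := by
      simp [hm_norm]
    rwa [h_norms, ← Finset.sum_Icc_one_eq_sum_range] at h_sum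
  have h_norm_S : G * Real.sqrt T ≤ ‖S‖ := by
    calc G * Real.sqrt T = Real.sqrt (T * G ^ 2) := by
          rw [Real.sqrt_mul (Nat.cast_nonneg T), Real.sqrt_sq hG.le, mul_comm]
      _ ≤ Real.sqrt (‖S‖ ^ 2) := Real.sqrt_le_sqrt h_growth
      _ = ‖S‖ := Real.sqrt_sq (norm_nonneg S)
  have h_min := iInf_inner_closedBall_le S (half_pos hD).le
  rw [h_loss]
  nlinarith

/-- For every dimension `d ≥ 2`, horizon `T ≥ 1`, `D > 0`, `G > 0`, and every
deterministic player strategy `σ` (where the action at round `t` depends only on the previously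
revealed loss vectors `m 1, …, m (t-1)` and lies in the ball `𝒟` of radius `D/2`), there exist
loss vectors `m 1, …, m T` of norm `G` such that the linear-game regret is at least
`0.5 · D · G · √T`. -/
theorem stmt0 (d T : ℕ) (hd : 2 ≤ d) (hT : 1 ≤ T) (D G : ℝ) (hD : 0 < D) (hG : 0 < G)
    (σ : (t : ℕ) → (Fin t → EuclideanSpace ℝ (Fin d)) → EuclideanSpace ℝ (Fin d))
    (hσ : ∀ t ms, σ t ms ∈ Metric.closedBall (0 : EuclideanSpace ℝ (Fin d)) (D / 2)) :
    ∃ m : ℕ → EuclideanSpace ℝ (Fin d),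
      (∀ t ∈ Finset.Icc 1 T, ‖m t‖ = G) ∧
      (let w : ℕ → EuclideanSpace ℝ (Fin d) :=
        fun t => σ (t - 1) (fun j => m (j.val + 1));
       (∑ t ∈ Finset.Icc 1 T, ⟪m t, w t⟫_ℝ) -
          (⨅ v : Metric.closedBall (0 : EuclideanSpace ℝ (Fin d)) (D / 2),
            ⟪∑ t ∈ Finset.Icc 1 T, m t, (v : EuclideanSpace ℝ (Fin d))⟫_ℝ) ≥
        0.5 * D * G * Real.sqrt T) :=
  stmt0_general d T hd D G hD hG σ
end

section
/- For every dimension d ≥ 2, every horizon T ≥ 1, every D > 0 and G > 0, every switching budget S with 0 < S < D, and every deterministic player strategy σ, there exist loss vectors m_1, …, m_T ∈ ℝ^d with ‖m_t‖ = G for all t such that, letting w_t = σ_t(m_1, …, m_{t−1}) be the player's actions, either the continuous switching constraint Σ_{t=2}^T ‖w_t − w_{t−1}‖ ≤ S is violated, or the regret satisfies R = Σ_{t=1}^T ⟨m_t, w_t⟩ − min_{w ∈ 𝒟} ⟨Σ_{t=1}^T m_t, w⟩ ≥ 0.05·D·G·T. -/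
open scoped InnerProductSpace BigOperators

private lemma stmt2_exists_orth (d : ℕ) (hd : 2 ≤ d) (x : EuclideanSpace ℝ (Fin d)) :
    ∃ u : EuclideanSpace ℝ (Fin d), ‖u‖ = 1 ∧ ⟪u, x⟫_ℝ = 0 := by
  by_cases hx : x = 0
  · refine ⟨EuclideanSpace.single ⟨0, by omega⟩ 1, ?_, ?_⟩
    · simp [EuclideanSpace.norm_single]
    · simp [hx]
  · have h1 : Module.finrank ℝ (ℝ ∙ x) = 1 := finrank_span_singleton hx
    have h2 : Module.finrank ℝ (ℝ ∙ x) + Module.finrank ℝ (ℝ ∙ x)ᗮ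
        = Module.finrank ℝ (EuclideanSpace ℝ (Fin d)) :=
      Submodule.finrank_add_finrank_orthogonal (K := ℝ ∙ x)
    have h3 : Module.finrank ℝ (EuclideanSpace ℝ (Fin d)) = d := by
      simp [finrank_euclideanSpace]
    have h4 : 0 < Module.finrank ℝ (ℝ ∙ x)ᗮ := by omega
    have h5 : (ℝ ∙ x)ᗮ ≠ ⊥ := by
      intro h; rw [h] at h4; simp at h4
    obtain ⟨y, hy, hy0⟩ := Submodule.exists_mem_ne_zero_of_ne_bot h5
    refine ⟨(‖y‖⁻¹ : ℝ) • y, ?_, ?_⟩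
    · rw [norm_smul]; simp [norm_ne_zero_iff.2 hy0]
    · have := (Submodule.mem_orthogonal _ _).1 hy x (Submodule.mem_span_singleton_self x)
      rw [real_inner_smul_left, real_inner_comm, this, mul_zero]

private lemma stmt2_exists_unit (d : ℕ) (hd : 2 ≤ d) (x y : EuclideanSpace ℝ (Fin d)) :
    ∃ u : EuclideanSpace ℝ (Fin d), ‖u‖ = 1 ∧ 0 ≤ ⟪u, x⟫_ℝ ∧ 0 ≤ ⟪u, y⟫_ℝ := by
  by_cases hv : (‖y‖ : ℝ) • x + (‖x‖ : ℝ) • y = 0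
  · -- x and y are "antiparallel" (or degenerate); pick u orthogonal to both
    by_cases hy : y = 0
    · obtain ⟨u, hu1, hu2⟩ := stmt2_exists_orth d hd x
      exact ⟨u, hu1, le_of_eq hu2.symm, by simp [hy]⟩
    · obtain ⟨u, hu1, hu2⟩ := stmt2_exists_orth d hd y
      have hxy : x = (-(‖x‖ / ‖y‖) : ℝ) • y := by
        have hn : (‖y‖ : ℝ) ≠ 0 := norm_ne_zero_iff.2 hy
        have : (‖y‖ : ℝ) • x = -((‖x‖ : ℝ) • y) := by
          rw [eq_neg_iff_add_eq_zero]; exact hv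
        calc x = (‖y‖⁻¹ : ℝ) • ((‖y‖ : ℝ) • x) := by rw [smul_smul, inv_mul_cancel₀ hn, one_smul]
        _ = (‖y‖⁻¹ : ℝ) • (-((‖x‖ : ℝ) • y)) := by rw [this]
        _ = (-(‖x‖ / ‖y‖) : ℝ) • y := by
            rw [smul_neg, smul_smul]
            rw [← neg_smul]
            congr 1
            field_simp
      refine ⟨u, hu1, ?_, le_of_eq hu2.symm⟩
      rw [hxy, real_inner_smul_right, hu2, mul_zero]
  · set v := (‖y‖ : ℝ) • x + (‖x‖ : ℝ) • y with hvdef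
    have hvx : 0 ≤ ⟪v, x⟫_ℝ := by
      rw [hvdef, inner_add_left, real_inner_smul_left, real_inner_smul_left]
      have h1 : ⟪x, x⟫_ℝ = ‖x‖ * ‖x‖ := real_inner_self_eq_norm_mul_norm x
      have h2 : -(‖y‖ * ‖x‖) ≤ ⟪y, x⟫_ℝ := neg_le_of_neg_le (by
        have := abs_real_inner_le_norm y x
        linarith [neg_abs_le ⟪y, x⟫_ℝ, abs_nonneg ⟪y, x⟫_ℝ])
      nlinarith [norm_nonneg x, norm_nonneg y]
    have hvy : 0 ≤ ⟪v, y⟫_ℝ := by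
      rw [hvdef, inner_add_left, real_inner_smul_left, real_inner_smul_left]
      have h1 : ⟪y, y⟫_ℝ = ‖y‖ * ‖y‖ := real_inner_self_eq_norm_mul_norm y
      have h2 : -(‖x‖ * ‖y‖) ≤ ⟪x, y⟫_ℝ := neg_le_of_neg_le (by
        have := abs_real_inner_le_norm x y
        linarith [neg_abs_le ⟪x, y⟫_ℝ])
      nlinarith [norm_nonneg x, norm_nonneg y]
    refine ⟨(‖v‖⁻¹ : ℝ) • v, ?_, ?_, ?_⟩
    · rw [norm_smul]; simp [norm_ne_zero_iff.2 hv]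
    · rw [real_inner_smul_left]
      exact mul_nonneg (inv_nonneg.2 (norm_nonneg v)) hvx
    · rw [real_inner_smul_left]
      exact mul_nonneg (inv_nonneg.2 (norm_nonneg v)) hvy

open Classical in
noncomputable def stmt2_pickU (d : ℕ) (x y : EuclideanSpace ℝ (Fin d)) :
    EuclideanSpace ℝ (Fin d) :=
  if h : ∃ u : EuclideanSpace ℝ (Fin d), ‖u‖ = 1 ∧ 0 ≤ ⟪u, x⟫_ℝ ∧ 0 ≤ ⟪u, y⟫_ℝ
  then h.choose else 0

private lemma stmt2_pickU_spec (d : ℕ) (hd : 2 ≤ d) (x y : EuclideanSpace ℝ (Fin d)) :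
    ‖stmt2_pickU d x y‖ = 1 ∧ 0 ≤ ⟪stmt2_pickU d x y, x⟫_ℝ ∧ 0 ≤ ⟪stmt2_pickU d x y, y⟫_ℝ := by
  classical
  rw [stmt2_pickU, dif_pos (stmt2_exists_unit d hd x y)]
  exact (stmt2_exists_unit d hd x y).choose_spec

noncomputable def stmt2_adv (d : ℕ)
    (σ : (t : ℕ) → (Fin t → EuclideanSpace ℝ (Fin d)) → EuclideanSpace ℝ (Fin d))
    (G D : ℝ) : ℕ → (EuclideanSpace ℝ (Fin d)) × (EuclideanSpace ℝ (Fin d))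
  | 0 => (0, 0)
  | 1 =>
      let w := σ 0 (fun j => j.elim0)
      let mt := G • stmt2_pickU d w 0
      (mt, mt)
  | (t+2) =>
      let prev := stmt2_adv d σ G D (t+1)
      let w := σ (t+1) (fun j => (stmt2_adv d σ G D (j.1+1)).1)
      let mt := if -(G*(D/10)) ≤ ⟪prev.1, w⟫_ℝ then prev.1
                else G • stmt2_pickU d w prev.2
      (mt, prev.2 + mt)
  termination_by t => t
  decreasing_by
  · omega
  · exact Nat.add_lt_add_right j.isLt 1

noncomputable def stmt2_m (d : ℕ) (σ : (t : ℕ) → (Fin t → EuclideanSpace ℝ (Fin d)) → EuclideanSpace ℝ (Fin d)) (G D : ℝ) (t : ℕ) : EuclideanSpace ℝ (Fin d) :=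
  (stmt2_adv d σ G D t).1

noncomputable def stmt2_M (d : ℕ) (σ : (t : ℕ) → (Fin t → EuclideanSpace ℝ (Fin d)) → EuclideanSpace ℝ (Fin d)) (G D : ℝ) (t : ℕ) : EuclideanSpace ℝ (Fin d) :=
  (stmt2_adv d σ G D t).2

noncomputable def stmt2_w (d : ℕ) (σ : (t : ℕ) → (Fin t → EuclideanSpace ℝ (Fin d)) → EuclideanSpace ℝ (Fin d)) (G D : ℝ) (t : ℕ) : EuclideanSpace ℝ (Fin d) :=
  σ (t-1) (fun j => stmt2_m d σ G D (j.1 + 1))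

section eqs
variable (d : ℕ) (σ : (t : ℕ) → (Fin t → EuclideanSpace ℝ (Fin d)) → EuclideanSpace ℝ (Fin d)) (G D : ℝ)

example : stmt2_w d σ G D (3+2) = σ (3+1) (fun j => stmt2_m d σ G D (j.1+1)) := rfl

private lemma stmt2_m_one : stmt2_m d σ G D 1 = G • stmt2_pickU d (stmt2_w d σ G D 1) 0 := by
  have h : (fun j : Fin 0 => j.elim0 : Fin 0 → EuclideanSpace ℝ (Fin d))
      = fun j : Fin 0 => stmt2_m d σ G D (j.1+1) := funext fun j => j.elim0
  show (stmt2_adv d σ G D 1).1 = _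
  rw [stmt2_adv, h]
  rfl

private lemma stmt2_M_zero : stmt2_M d σ G D 0 = 0 := by
  show (stmt2_adv d σ G D 0).2 = 0
  rw [stmt2_adv]

private lemma stmt2_M_one : stmt2_M d σ G D 1 = stmt2_m d σ G D 1 := by
  show (stmt2_adv d σ G D 1).2 = (stmt2_adv d σ G D 1).1
  rw [stmt2_adv]

private lemma stmt2_M_succ (t : ℕ) :
    stmt2_M d σ G D (t+2) = stmt2_M d σ G D (t+1) + stmt2_m d σ G D (t+2) := by
  show (stmt2_adv d σ G D (t+2)).2 = (stmt2_adv d σ G D (t+1)).2 + (stmt2_adv d σ G D (t+2)).1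
  conv_lhs => rw [stmt2_adv]
  conv_rhs => rw [stmt2_adv]

private lemma stmt2_m_keep (t : ℕ)
    (hc : -(G*(D/10)) ≤ ⟪stmt2_m d σ G D (t+1), stmt2_w d σ G D (t+2)⟫_ℝ) :
    stmt2_m d σ G D (t+2) = stmt2_m d σ G D (t+1) := by
  show (stmt2_adv d σ G D (t+2)).1 = (stmt2_adv d σ G D (t+1)).1
  rw [stmt2_adv]
  exact if_pos hc

private lemma stmt2_m_switch (t : ℕ)
    (hc : ¬ -(G*(D/10)) ≤ ⟪stmt2_m d σ G D (t+1), stmt2_w d σ G D (t+2)⟫_ℝ) :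
    stmt2_m d σ G D (t+2)
      = G • stmt2_pickU d (stmt2_w d σ G D (t+2)) (stmt2_M d σ G D (t+1)) := by
  show (stmt2_adv d σ G D (t+2)).1 = _
  rw [stmt2_adv]
  exact if_neg hc

end eqs

section facts
variable (d : ℕ) (σ : (t : ℕ) → (Fin t → EuclideanSpace ℝ (Fin d)) → EuclideanSpace ℝ (Fin d)) (G D : ℝ)


private lemma stmt2_m_norm (hd : 2 ≤ d) (hG : 0 < G) (t : ℕ) :
    ‖stmt2_m d σ G D (t+1)‖ = G := by
  induction t with
  | zero =>
      rw [stmt2_m_one, norm_smul, (stmt2_pickU_spec d hd _ _).1]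
      simp [abs_of_pos hG]
  | succ t ih =>
      by_cases hc : -(G*(D/10)) ≤ ⟪stmt2_m d σ G D (t+1), stmt2_w d σ G D (t+2)⟫_ℝ
      · rw [stmt2_m_keep d σ G D t hc]; exact ih
      · rw [stmt2_m_switch d σ G D t hc, norm_smul, (stmt2_pickU_spec d hd _ _).1]
        simp [abs_of_pos hG]

private lemma stmt2_round_lb (hd : 2 ≤ d) (hG : 0 < G) (hD : 0 < D) (t : ℕ) :
    -(G*(D/10)) ≤ ⟪stmt2_m d σ G D (t+1), stmt2_w d σ G D (t+1)⟫_ℝ := by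
  have hn : (0:ℝ) ≤ G*(D/10) := by positivity
  cases t with
  | zero =>
      rw [stmt2_m_one, real_inner_smul_left]
      have := (stmt2_pickU_spec d hd (stmt2_w d σ G D 1) 0).2.1
      nlinarith
  | succ t =>
      by_cases hc : -(G*(D/10)) ≤ ⟪stmt2_m d σ G D (t+1), stmt2_w d σ G D (t+2)⟫_ℝ
      · rw [stmt2_m_keep d σ G D t hc]; exact hc
      · rw [stmt2_m_switch d σ G D t hc, real_inner_smul_left]
        have := (stmt2_pickU_spec d hd (stmt2_w d σ G D (t+2)) (stmt2_M d σ G D (t+1))).2.1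
        nlinarith

private lemma stmt2_M_sum (t : ℕ) :
    stmt2_M d σ G D t = ∑ s ∈ Finset.Icc 1 t, stmt2_m d σ G D s := by
  induction t with
  | zero => simp [stmt2_M_zero]
  | succ t ih =>
      cases t with
      | zero => simp [stmt2_M_one]
      | succ t =>
          rw [stmt2_M_succ, ih, Finset.sum_Icc_succ_top (by omega : 1 ≤ t+2)]

end facts

private lemma stmt2_sqrt_step (q B c : ℝ) (hq : 0 ≤ q) (hB : 0 ≤ B) (hc : 0 ≤ c) :
    Real.sqrt (q*B) + c ≤ Real.sqrt ((q+1)*(B+c^2)) := by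
  have hs := Real.sq_sqrt (mul_nonneg hq hB)
  have hsn := Real.sqrt_nonneg (q*B)
  have key : (Real.sqrt (q*B) + c)^2 ≤ (q+1)*(B+c^2) := by
    rcases eq_or_lt_of_le hq with h|h
    · have : Real.sqrt (q*B) = 0 := by rw [← h]; simp
      rw [this]; nlinarith
    · nlinarith [sq_nonneg (q*c - Real.sqrt (q*B))]
  calc Real.sqrt (q*B) + c = Real.sqrt ((Real.sqrt (q*B) + c)^2) :=
        (Real.sqrt_sq (by positivity)).symm
  _ ≤ Real.sqrt ((q+1)*(B+c^2)) := Real.sqrt_le_sqrt key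

private lemma stmt2_invariant (d : ℕ)
    (σ : (t : ℕ) → (Fin t → EuclideanSpace ℝ (Fin d)) → EuclideanSpace ℝ (Fin d))
    (G D : ℝ) (hd : 2 ≤ d) (hG : 0 < G) (hD : 0 < D) (t : ℕ) :
    ∃ q ℓ : ℕ, ∃ B : ℝ, 0 ≤ B ∧ 1 ≤ ℓ ∧ (ℓ:ℝ) ≤ (t+1:ℕ) ∧
      (q:ℝ)*(G*(D/10)) + max 0 (-⟪stmt2_m d σ G D (t+1), stmt2_w d σ G D (t+1)⟫_ℝ)
        ≤ G * (∑ s ∈ Finset.Icc 2 (t+1), ‖stmt2_w d σ G D s - stmt2_w d σ G D (s-1)‖) ∧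
      (ℓ:ℝ) * G^2 ≤ ⟪stmt2_m d σ G D (t+1), stmt2_M d σ G D (t+1)⟫_ℝ ∧
      B + (ℓ:ℝ)^2*G^2 ≤ ‖stmt2_M d σ G D (t+1)‖^2 ∧
      ((t+1:ℕ):ℝ) - (ℓ:ℝ) ≤ Real.sqrt ((q:ℝ)*B) / G := by
  induction t with
  | zero =>
      refine ⟨0, 1, 0, le_refl _, le_refl _, by norm_num, ?_, ?_, ?_, by simp⟩
      · have h1 : (0:ℝ) ≤ ⟪stmt2_m d σ G D 1, stmt2_w d σ G D 1⟫_ℝ := by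
          rw [stmt2_m_one, real_inner_smul_left]
          have := (stmt2_pickU_spec d hd (stmt2_w d σ G D 1) 0).2.1
          nlinarith
        have h2 : Finset.Icc 2 1 = (∅ : Finset ℕ) := by decide
        have h3 : max 0 (-⟪stmt2_m d σ G D 1, stmt2_w d σ G D 1⟫_ℝ) = 0 :=
          max_eq_left (neg_nonpos.mpr h1)
        rw [h2, h3]
        simp
      · rw [stmt2_M_one, real_inner_self_eq_norm_sq, stmt2_m_norm d σ G D hd hG 0]
        norm_num
      · rw [stmt2_M_one, stmt2_m_norm d σ G D hd hG 0]
        norm_num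
  | succ t ih =>
      simp only [show t+1+1 = t+2 from rfl]
      obtain ⟨q, ℓ, B, hB0, hℓ1, hℓt, hA1, hA2, hA3, hA4⟩ := ih
      push_cast at hℓt hA4
      set mc := stmt2_m d σ G D (t+1) with hmc
      set wc := stmt2_w d σ G D (t+1) with hwc
      set w' := stmt2_w d σ G D (t+2) with hw'
      set Mc := stmt2_M d σ G D (t+1) with hMc
      set m' := stmt2_m d σ G D (t+2) with hm'
      have hmnorm : ‖mc‖ = G := stmt2_m_norm d σ G D hd hG t
      have hm'norm : ‖m'‖ = G := stmt2_m_norm d σ G D hd hG (t+1)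
      have hM2 : stmt2_M d σ G D (t+2) = Mc + m' := stmt2_M_succ d σ G D t
      have hVstep : (∑ s ∈ Finset.Icc 2 (t+2), ‖stmt2_w d σ G D s - stmt2_w d σ G D (s-1)‖)
          = (∑ s ∈ Finset.Icc 2 (t+1), ‖stmt2_w d σ G D s - stmt2_w d σ G D (s-1)‖)
            + ‖w' - wc‖ := by
        rw [Finset.sum_Icc_succ_top (by omega : 2 ≤ t+2)]
        rfl
      have hlip : |⟪mc, w'⟫_ℝ - ⟪mc, wc⟫_ℝ| ≤ G * ‖w' - wc‖ := by
        rw [← inner_sub_right]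
        calc |⟪mc, w' - wc⟫_ℝ| ≤ ‖mc‖ * ‖w' - wc‖ := abs_real_inner_le_norm _ _
        _ = G * ‖w' - wc‖ := by rw [hmnorm]
      have hmaxlip : max 0 (-⟪mc, w'⟫_ℝ) ≤ max 0 (-⟪mc, wc⟫_ℝ) + G * ‖w' - wc‖ := by
        have h1 : (0:ℝ) ≤ G * ‖w' - wc‖ := by positivity
        rcases max_cases 0 (-⟪mc, w'⟫_ℝ) with ⟨h, _⟩|⟨h, _⟩ <;>
          rcases max_cases 0 (-⟪mc, wc⟫_ℝ) with ⟨h', _⟩|⟨h', _⟩ <;>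
          rw [h, h'] <;> cases abs_le.mp hlip <;> linarith
      by_cases hc : -(G*(D/10)) ≤ ⟪mc, w'⟫_ℝ
      · -- keep step
        have hmeq : m' = mc := stmt2_m_keep d σ G D t hc
        refine ⟨q, ℓ+1, B, hB0, by omega, by push_cast; linarith, ?_, ?_, ?_, ?_⟩
        · rw [hVstep, hmeq, mul_add]
          linarith
        · rw [hM2, hmeq, inner_add_right, real_inner_self_eq_norm_sq, hmnorm]
          push_cast
          linarith
        · have hcm : ⟪Mc, mc⟫_ℝ = ⟪mc, Mc⟫_ℝ := real_inner_comm _ _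
          rw [hM2, hmeq, norm_add_sq_real, hmnorm]
          push_cast
          nlinarith [hA2, hA3, hcm]
        · push_cast
          linarith
      · -- switch step
        have hmeq : m' = G • stmt2_pickU d w' Mc := stmt2_m_switch d σ G D t hc
        obtain ⟨hu1, huw, huM⟩ := stmt2_pickU_spec d hd w' Mc
        have hm'w : (0:ℝ) ≤ ⟪m', w'⟫_ℝ := by
          rw [hmeq, real_inner_smul_left]; exact mul_nonneg hG.le huw
        have hm'M : (0:ℝ) ≤ ⟪m', Mc⟫_ℝ := by
          rw [hmeq, real_inner_smul_left]; exact mul_nonneg hG.le huM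
        refine ⟨q+1, 1, B + (ℓ:ℝ)^2*G^2, by positivity, le_refl _,
          by push_cast; linarith, ?_, ?_, ?_, ?_⟩
        · rw [hVstep, mul_add]
          push_neg at hc
          have h2 : G*(D/10) ≤ max 0 (-⟪mc, w'⟫_ℝ) := by
            have h2' : G*(D/10) < -⟪mc, w'⟫_ℝ := by linarith
            exact le_trans h2'.le (le_max_right _ _)
          have h3 : max 0 (-⟪m', w'⟫_ℝ) = 0 := max_eq_left (neg_nonpos.mpr hm'w)
          rw [h3]
          push_cast
          linarith
        · rw [hM2, inner_add_right, real_inner_self_eq_norm_sq, hm'norm]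
          push_cast
          linarith [hm'M]
        · have hcm : ⟪Mc, m'⟫_ℝ = ⟪m', Mc⟫_ℝ := real_inner_comm _ _
          rw [hM2, norm_add_sq_real, hm'norm]
          push_cast
          linarith [hA3, hm'M, hcm]
        · have hc0 : (0:ℝ) ≤ (ℓ:ℝ)*G := by positivity
          have hstep := stmt2_sqrt_step (q:ℝ) B ((ℓ:ℝ)*G) (Nat.cast_nonneg q) hB0 hc0
          have hsq : ((ℓ:ℝ)*G)^2 = (ℓ:ℝ)^2*G^2 := by ring
          rw [hsq] at hstep
          have expand : (Real.sqrt ((q:ℝ)*B) + (ℓ:ℝ)*G)/G = Real.sqrt ((q:ℝ)*B)/G + ℓ := by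
            field_simp
          push_cast
          calc (t:ℝ)+2-1 = ((t:ℝ)+1-ℓ) + ℓ := by ring
          _ ≤ Real.sqrt ((q:ℝ)*B)/G + ℓ := by linarith
          _ = (Real.sqrt ((q:ℝ)*B) + (ℓ:ℝ)*G)/G := expand.symm
          _ ≤ Real.sqrt (((q:ℝ)+1)*(B+(ℓ:ℝ)^2*G^2))/G := by gcongr

set_option maxHeartbeats 1000000 in
/-- For `d ≥ 2`, `T ≥ 1`, `D, G > 0`, any switching budget `S` with `0 < S < D`,
and every deterministic player strategy `σ`, there exist loss vectors of norm `G` such that either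
the continuous switching constraint `∑_{t=2}^T ‖w t − w (t−1)‖ ≤ S` is violated, or the regret is
at least `0.05 · D · G · T`. -/
theorem stmt2 (d T : ℕ) (hd : 2 ≤ d) (hT : 1 ≤ T) (D G S : ℝ) (hD : 0 < D) (hG : 0 < G)
    (hSlow : 0 < S) (hShigh : S < D)
    (σ : (t : ℕ) → (Fin t → EuclideanSpace ℝ (Fin d)) → EuclideanSpace ℝ (Fin d))
    (hσ : ∀ t ms, σ t ms ∈ Metric.closedBall (0 : EuclideanSpace ℝ (Fin d)) (D / 2)) :
    ∃ m : ℕ → EuclideanSpace ℝ (Fin d),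
      (∀ t ∈ Finset.Icc 1 T, ‖m t‖ = G) ∧
      (let w : ℕ → EuclideanSpace ℝ (Fin d) :=
        fun t => σ (t - 1) (fun j => m (j.val + 1));
       ¬ (∑ t ∈ Finset.Icc 2 T, ‖w t - w (t - 1)‖ ≤ S) ∨
       (∑ t ∈ Finset.Icc 1 T, ⟪m t, w t⟫_ℝ) -
          (⨅ v : Metric.closedBall (0 : EuclideanSpace ℝ (Fin d)) (D / 2),
            ⟪∑ t ∈ Finset.Icc 1 T, m t, (v : EuclideanSpace ℝ (Fin d))⟫_ℝ) ≥
        0.05 * D * G * T) := by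
  classical
  refine ⟨stmt2_m d σ G D, ?_, ?_⟩
  · intro t ht
    obtain ⟨h1, _⟩ := Finset.mem_Icc.mp ht
    obtain ⟨s, rfl⟩ : ∃ s, t = s+1 := ⟨t-1, by omega⟩
    exact stmt2_m_norm d σ G D hd hG s
  · intro w
    by_cases hsw : (∑ t ∈ Finset.Icc 2 T, ‖w t - w (t-1)‖) ≤ S
    · right
      -- the invariant at time T
      obtain ⟨q, ℓ, B, hB0, hℓ1, hℓT, hA1, hA2, hA3, hA4⟩ :=
        stmt2_invariant d σ G D hd hG hD (T-1)
      rw [show T - 1 + 1 = T by omega] at hℓT hA1 hA2 hA3 hA4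
      set MT := stmt2_M d σ G D T with hMT
      have hVS : (∑ s ∈ Finset.Icc 2 T, ‖stmt2_w d σ G D s - stmt2_w d σ G D (s-1)‖) ≤ S :=
        hsw
      have hmax0 : (0:ℝ) ≤ max 0 (-⟪stmt2_m d σ G D T, stmt2_w d σ G D T⟫_ℝ) :=
        le_max_left _ _
      -- number of switches is at most 9
      have hq9 : (q:ℝ) ≤ 9 := by
        have h1 : (q:ℝ)*(G*(D/10)) ≤ G*S := by
          have h2 := mul_le_mul_of_nonneg_left hVS hG.le
          linarith
        by_contra hcon
        push_neg at hcon
        have hq' : 9 < q := by exact_mod_cast hcon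
        have hq10 : (10:ℝ) ≤ (q:ℝ) := by exact_mod_cast (by omega : 10 ≤ q)
        have hGS : G*S < G*D := mul_lt_mul_of_pos_left hShigh hG
        have hGD : (10:ℝ)*(G*(D/10)) ≤ (q:ℝ)*(G*(D/10)) :=
          mul_le_mul_of_nonneg_right hq10 (by positivity)
        linarith
      have hq10 : ((q:ℝ)+1) ≤ 10 := by linarith
      -- lower bound on ‖MT‖
      have hc0 : (0:ℝ) ≤ (ℓ:ℝ)*G := by positivity
      have h5 := stmt2_sqrt_step (q:ℝ) B ((ℓ:ℝ)*G) (Nat.cast_nonneg q) hB0 hc0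
      rw [show ((ℓ:ℝ)*G)^2 = (ℓ:ℝ)^2*G^2 by ring] at h5
      have h6 : Real.sqrt (((q:ℝ)+1)*(B+(ℓ:ℝ)^2*G^2)) ≤ Real.sqrt (10*‖MT‖^2) := by
        apply Real.sqrt_le_sqrt
        have hnn : (0:ℝ) ≤ B + (ℓ:ℝ)^2*G^2 := by positivity
        exact mul_le_mul hq10 hA3 hnn (by norm_num)
      rw [show Real.sqrt (10*‖MT‖^2) = Real.sqrt 10 * ‖MT‖ by
        rw [Real.sqrt_mul (by norm_num), Real.sqrt_sq (norm_nonneg _)]] at h6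
      have e1 : ((T:ℝ) - ℓ)*G ≤ Real.sqrt ((q:ℝ)*B) := by
        have h7 := mul_le_mul_of_nonneg_right hA4 hG.le
        rwa [div_mul_cancel₀ _ hG.ne'] at h7
      have hGT : (T:ℝ)*G ≤ Real.sqrt 10 * ‖MT‖ := by linarith [e1, h5, h6]
      have hs10 : Real.sqrt 10 ≤ 10/3 := by
        rw [show (10:ℝ)/3 = Real.sqrt ((10/3)^2) from (Real.sqrt_sq (by norm_num)).symm]
        exact Real.sqrt_le_sqrt (by norm_num)
      have hMTlb : (0.3:ℝ)*(G*(T:ℝ)) ≤ ‖MT‖ := by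
        linarith [mul_le_mul_of_nonneg_right hs10 (norm_nonneg MT)]
      have hTR : (1:ℝ) ≤ (T:ℝ) := by exact_mod_cast hT
      have hMTpos : 0 < ‖MT‖ := by
        have := mul_le_mul_of_nonneg_left hTR hG.le
        linarith
      -- lower bound on the sum of losses
      have hsum : -((T:ℝ) * (G*(D/10)))
          ≤ ∑ t ∈ Finset.Icc 1 T, ⟪stmt2_m d σ G D t, w t⟫_ℝ := by
        have hb : ∀ t ∈ Finset.Icc 1 T, -(G*(D/10)) ≤ ⟪stmt2_m d σ G D t, w t⟫_ℝ := by
          intro t ht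
          obtain ⟨h1, _⟩ := Finset.mem_Icc.mp ht
          obtain ⟨s, rfl⟩ : ∃ s, t = s+1 := ⟨t-1, by omega⟩
          exact stmt2_round_lb d σ G D hd hG hD s
        calc -((T:ℝ)*(G*(D/10))) = ∑ _t ∈ Finset.Icc 1 T, (-(G*(D/10))) := by
              rw [Finset.sum_const, Nat.card_Icc]
              simp only [nsmul_eq_mul]
              push_cast [show T + 1 - 1 = T by omega]
              ring
        _ ≤ _ := Finset.sum_le_sum hb
      -- upper bound on the infimum
      set v0 : EuclideanSpace ℝ (Fin d) := (-(D/2) * ‖MT‖⁻¹) • MT with hv0def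
      have hv0 : v0 ∈ Metric.closedBall (0 : EuclideanSpace ℝ (Fin d)) (D/2) := by
        rw [mem_closedBall_zero_iff, hv0def, norm_smul, Real.norm_eq_abs]
        rw [abs_mul, abs_neg, abs_of_pos (by linarith : (0:ℝ) < D/2),
          abs_of_pos (by positivity : (0:ℝ) < ‖MT‖⁻¹)]
        rw [mul_assoc, inv_mul_cancel₀ hMTpos.ne', mul_one]
      have hMsum : (∑ t ∈ Finset.Icc 1 T, stmt2_m d σ G D t) = MT :=
        (stmt2_M_sum d σ G D T).symm
      have hinner0 : ⟪∑ t ∈ Finset.Icc 1 T, stmt2_m d σ G D t, v0⟫_ℝ = -(D/2*‖MT‖) := by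
        rw [hMsum, hv0def, real_inner_smul_right, real_inner_self_eq_norm_sq]
        field_simp
      have hbdd : BddBelow (Set.range fun v : Metric.closedBall (0 : EuclideanSpace ℝ (Fin d)) (D/2) =>
          ⟪∑ t ∈ Finset.Icc 1 T, stmt2_m d σ G D t, (v : EuclideanSpace ℝ (Fin d))⟫_ℝ) := by
        refine ⟨-(‖MT‖*(D/2)), ?_⟩
        rintro x ⟨v, rfl⟩
        have h8 : ‖(v : EuclideanSpace ℝ (Fin d))‖ ≤ D/2 := mem_closedBall_zero_iff.1 v.2
        have h9 := abs_real_inner_le_norm (∑ t ∈ Finset.Icc 1 T, stmt2_m d σ G D t)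
          (v : EuclideanSpace ℝ (Fin d))
        rw [hMsum] at h9 ⊢
        have h10 := neg_abs_le ⟪MT, (v : EuclideanSpace ℝ (Fin d))⟫_ℝ
        have h11 : ‖MT‖ * ‖(v : EuclideanSpace ℝ (Fin d))‖ ≤ ‖MT‖ * (D/2) :=
          mul_le_mul_of_nonneg_left h8 (norm_nonneg _)
        simp only [ge_iff_le, Set.mem_setOf_eq]
        linarith
      have hinf : (⨅ v : Metric.closedBall (0 : EuclideanSpace ℝ (Fin d)) (D/2),
          ⟪∑ t ∈ Finset.Icc 1 T, stmt2_m d σ G D t, (v : EuclideanSpace ℝ (Fin d))⟫_ℝ)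
          ≤ -(D/2*‖MT‖) := by
        have h12 := ciInf_le hbdd
          (⟨v0, hv0⟩ : Metric.closedBall (0 : EuclideanSpace ℝ (Fin d)) (D/2))
        rwa [hinner0] at h12
      rw [ge_iff_le]
      have hD2 : (0:ℝ) ≤ D/2 := by linarith
      linarith [mul_le_mul_of_nonneg_left hMTlb hD2, hsum, hinf]
    · exact Or.inl hsw
end

section
/- Let T ≥ 1, let w_1, …, w_T and m_1, …, m_T be vectors in ℝ^d, let G, c, S > 0, and suppose the rounds {1, …, T} are partitioned into N consecutive epochs with start indices 1 = l_1 < l_2 < ⋯ < l_N ≤ T (setting l_{N+1} = T + 1) such that: (i) ‖m_t‖ = G for all t; (ii) m_t = m_{l_τ} for every t with l_τ ≤ t < l_{τ+1}; (iii) ⟨m_{l_τ}, w_{l_τ}⟩ ≥ 0 for every epoch τ; and (iv) for every epoch τ and every t with l_τ ≤ t < l_{τ+1}, Σ_{j=l_τ+1}^{t} ‖w_j − w_{j−1}‖ ≤ c/S. Then Σ_{t=1}^T ⟨m_t, w_t⟩ ≥ −c·G·T/S. -/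
open scoped InnerProductSpace BigOperators

lemma stmt3_tele {E : Type*} [NormedAddCommGroup E] (w : ℕ → E) (a : ℕ) :
    ∀ t, a ≤ t → w t - w a = ∑ j ∈ Finset.Icc (a + 1) t, (w j - w (j - 1)) := by
  intro t ht
  induction t, ht using Nat.le_induction with
  | base => simp
  | succ t ht ih =>
    rw [Finset.sum_Icc_succ_top (by omega : a + 1 ≤ t + 1), ← ih]
    simp

/-- **Lemma 1.** If the rounds `1, …, T` are partitioned into `N` consecutive
epochs with start indices `1 = l 1 < l 2 < ⋯ < l N ≤ T` (with `l (N+1) = T + 1`) such that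
(i) `‖m t‖ = G`, (ii) `m` is constant on each epoch, (iii) `⟪m (l τ), w (l τ)⟫ ≥ 0`, and
(iv) within each epoch the accumulated switching cost is at most `c / S`, then
`∑_{t=1}^T ⟪m t, w t⟫ ≥ −c·G·T/S`. -/
theorem stmt3 (d T N : ℕ) (hT : 1 ≤ T) (hN : 1 ≤ N)
    (w m : ℕ → EuclideanSpace ℝ (Fin d)) (G c S : ℝ) (hG : 0 < G) (hc : 0 < c) (hS : 0 < S)
    (l : ℕ → ℕ) (hl1 : l 1 = 1) (hlmono : ∀ τ, 1 ≤ τ → τ < N → l τ < l (τ + 1))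
    (hlN : l N ≤ T) (hlN1 : l (N + 1) = T + 1)
    (hnorm : ∀ t ∈ Finset.Icc 1 T, ‖m t‖ = G)
    (hconst : ∀ τ ∈ Finset.Icc 1 N, ∀ t, l τ ≤ t → t < l (τ + 1) → m t = m (l τ))
    (hpos : ∀ τ ∈ Finset.Icc 1 N, 0 ≤ ⟪m (l τ), w (l τ)⟫_ℝ)
    (hsw : ∀ τ ∈ Finset.Icc 1 N, ∀ t, l τ ≤ t → t < l (τ + 1) →
      ∑ j ∈ Finset.Icc (l τ + 1) t, ‖w j - w (j - 1)‖ ≤ c / S) :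
    ∑ t ∈ Finset.Icc 1 T, ⟪m t, w t⟫_ℝ ≥ -(c * G * T / S) := by
  have key : ∀ t ∈ Finset.Icc 1 T, -(c * G / S) ≤ ⟪m t, w t⟫_ℝ := by
    intro t ht
    rw [Finset.mem_Icc] at ht
    obtain ⟨ht1, htT⟩ := ht
    obtain ⟨τ, hτ1, hτN, hlτ, hlτ1⟩ : ∃ τ, 1 ≤ τ ∧ τ ≤ N ∧ l τ ≤ t ∧ t < l (τ + 1) := by
      by_contra h
      push_neg at h
      have hall : ∀ τ, 1 ≤ τ → τ ≤ N + 1 → l τ ≤ t := by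
        intro τ
        induction τ with
        | zero => omega
        | succ k ih =>
          intro _ hk
          rcases Nat.eq_zero_or_pos k with hk0 | hk0
          · subst hk0; simp only [Nat.zero_add, hl1]; omega
          · exact h k hk0 (by omega) (ih hk0 (by omega))
      have := hall (N + 1) (by omega) le_rfl
      omega
    have hτmem : τ ∈ Finset.Icc 1 N := Finset.mem_Icc.mpr ⟨hτ1, hτN⟩
    have hm : m t = m (l τ) := hconst τ hτmem t hlτ hlτ1
    have hGn : ‖m (l τ)‖ = G := by rw [← hm]; exact hnorm t (Finset.mem_Icc.mpr ⟨ht1, htT⟩)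
    have htele : ‖w t - w (l τ)‖ ≤ c / S := by
      rw [stmt3_tele w (l τ) t hlτ]
      calc ‖∑ j ∈ Finset.Icc (l τ + 1) t, (w j - w (j - 1))‖
          ≤ ∑ j ∈ Finset.Icc (l τ + 1) t, ‖w j - w (j - 1)‖ := norm_sum_le _ _
        _ ≤ c / S := hsw τ hτmem t hlτ hlτ1
    have hsplit : ⟪m t, w t⟫_ℝ = ⟪m (l τ), w (l τ)⟫_ℝ + ⟪m (l τ), w t - w (l τ)⟫_ℝ := by
      rw [hm, inner_sub_right]; ring
    have hbound : -(G * (c / S)) ≤ ⟪m (l τ), w t - w (l τ)⟫_ℝ := by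
      have h1 : |⟪m (l τ), w t - w (l τ)⟫_ℝ| ≤ ‖m (l τ)‖ * ‖w t - w (l τ)‖ :=
        abs_real_inner_le_norm _ _
      have h2 : ‖m (l τ)‖ * ‖w t - w (l τ)‖ ≤ G * (c / S) := by
        rw [hGn]
        exact mul_le_mul_of_nonneg_left htele hG.le
      nlinarith [neg_abs_le ⟪m (l τ), w t - w (l τ)⟫_ℝ]
    have hp := hpos τ hτmem
    rw [hsplit]
    have : -(c * G / S) = -(G * (c / S)) := by ring
    linarith
  calc ∑ t ∈ Finset.Icc 1 T, ⟪m t, w t⟫_ℝ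
      ≥ ∑ _t ∈ Finset.Icc 1 T, -(c * G / S) := Finset.sum_le_sum key
    _ = (T : ℝ) * -(c * G / S) := by
        rw [Finset.sum_const, Nat.card_Icc]
        simp [nsmul_eq_mul]
    _ = -(c * G * T / S) := by ring
end

section
/- Let T ≥ 1, let w_1, …, w_T and m_1, …, m_T be vectors in ℝ^d, let G, c, S > 0, and suppose the rounds {1, …, T} are partitioned into N consecutive epochs with start indices 1 = l_1 < l_2 < ⋯ < l_N ≤ T (setting l_{N+1} = T + 1) such that: (i) ‖m_t‖ = G for all t; (ii) m_t = m_{l_τ} for every t with l_τ ≤ t < l_{τ+1}; (iii) ⟨m_{l_τ}, Σ_{j=1}^{l_τ−1} m_j⟩ ≥ 0 for every τ = 2, …, N; (iv) for every τ = 1, …, N−1, Σ_{j=l_τ+1}^{l_{τ+1}} ‖w_j − w_{j−1}‖ > c/S; and (v) Σ_{t=2}^T ‖w_t − w_{t−1}‖ ≤ S. Then ‖Σ_{t=1}^T m_t‖ ≥ G·T·√c / √(S² + c). -/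
open scoped InnerProductSpace BigOperators

/-!
Let `n τ` be the length of epoch `τ`. As `m` is constant on epochs, the sum over epoch `τ` is
`n τ • m (l τ)`, and by (iii) it makes a nonnegative inner product with the sum of all earlier
rounds; expanding the square epoch by epoch gives `‖∑ m t‖² ≥ G² ∑ n τ²`, and Cauchy–Schwarz
with `∑ n τ = T` gives `‖∑ m t‖² ≥ G² T² / N`. Each of the `N − 1` complete epochs uses more than
`c / S` of the switching budget `S`, so `(N − 1) c ≤ S²`, i.e. `1 / N ≥ c / (S² + c)`.
-/

open Finset

theorem sum_norm_sq_le_norm_sum_sq_of_inner_nonneg {E : Type*} [NormedAddCommGroup E]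
    [InnerProductSpace ℝ E] (x : ℕ → E) {a b : ℕ} (hab : a ≤ b)
    (h : ∀ k ∈ Ico a b, 0 ≤ ⟪x k, ∑ i ∈ Ico a k, x i⟫_ℝ) :
    ∑ i ∈ Ico a b, ‖x i‖ ^ 2 ≤ ‖∑ i ∈ Ico a b, x i‖ ^ 2 := by
  induction b, hab using Nat.le_induction with
  | base => simp
  | succ b hab ih =>
    have hb : 0 ≤ ⟪x b, ∑ i ∈ Ico a b, x i⟫_ℝ := h b (by simp [hab])
    have ih' := ih fun k hk => h k (by simp at hk ⊢; omega)
    rw [sum_Ico_succ_top hab, sum_Ico_succ_top hab, norm_add_sq_real, real_inner_comm]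
    linarith

theorem sum_sum_Ico_of_monotoneOn {M : Type*} [AddCommMonoid M] (f : ℕ → M) {l : ℕ → ℕ}
    {a b : ℕ} (hab : a ≤ b) (hl : MonotoneOn l (Set.Icc a b)) :
    ∑ τ ∈ Ico a b, ∑ j ∈ Ico (l τ) (l (τ + 1)), f j = ∑ j ∈ Ico (l a) (l b), f j := by
  induction b, hab using Nat.le_induction with
  | base => simp
  | succ b hab ih =>
    rw [sum_Ico_succ_top hab, ih (hl.mono (Set.Icc_subset_Icc_right b.le_succ)),
      sum_Ico_consecutive _ (hl ⟨le_rfl, by omega⟩ ⟨hab, by omega⟩ hab)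
        (hl ⟨hab, by omega⟩ ⟨by omega, le_rfl⟩ b.le_succ)]

theorem sq_mul_sum_sq_le_norm_sum_sq_of_epochs {E : Type*} [NormedAddCommGroup E]
    [InnerProductSpace ℝ E] (m : ℕ → E) (l : ℕ → ℕ) {G : ℝ} {a b : ℕ}
    (hab : a ≤ b) (hl : MonotoneOn l (Set.Icc a b))
    (hnorm : ∀ t ∈ Ico (l a) (l b), ‖m t‖ = G)
    (hconst : ∀ τ ∈ Ico a b, ∀ t ∈ Ico (l τ) (l (τ + 1)), m t = m (l τ))
    (hinner : ∀ τ ∈ Ioo a b, 0 ≤ ⟪m (l τ), ∑ t ∈ Ico (l a) (l τ), m t⟫_ℝ) :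
    G ^ 2 * ∑ τ ∈ Ico a b, ((l (τ + 1) - l τ : ℕ) : ℝ) ^ 2 ≤
      ‖∑ t ∈ Ico (l a) (l b), m t‖ ^ 2 := by
  have hepoch : ∀ τ ∈ Ico a b, ∑ t ∈ Ico (l τ) (l (τ + 1)), m t =
      ((l (τ + 1) - l τ : ℕ) : ℝ) • m (l τ) := fun τ hτ => by
    rw [sum_congr rfl (hconst τ hτ), sum_const, Nat.card_Ico, Nat.cast_smul_eq_nsmul]
  rw [← sum_sum_Ico_of_monotoneOn m hab hl, mul_sum]
  refine le_trans (le_of_eq (sum_congr rfl fun τ hτ => ?_))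
    (sum_norm_sq_le_norm_sum_sq_of_inner_nonneg _ hab fun k hk => ?_)
  · simp only [mem_Ico] at hτ
    rw [hepoch τ (mem_Ico.2 hτ), norm_smul, Real.norm_natCast]
    obtain hempty | hlt := Nat.eq_zero_or_pos (l (τ + 1) - l τ)
    · simp [hempty]
    · have hτa : l a ≤ l τ := hl ⟨le_rfl, hab⟩ ⟨hτ.1, hτ.2.le⟩ hτ.1
      have hτb : l (τ + 1) ≤ l b := hl ⟨by omega, hτ.2⟩ ⟨hab, le_rfl⟩ hτ.2
      rw [hnorm (l τ) (mem_Ico.2 ⟨hτa, by omega⟩)]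
      ring
  · simp only [mem_Ico] at hk
    obtain rfl | hak := eq_or_lt_of_le hk.1
    · simp
    rw [hepoch k (by simp [hk]), sum_sum_Ico_of_monotoneOn m hk.1
      (hl.mono (Set.Icc_subset_Icc_right hk.2.le)), real_inner_smul_left]
    exact mul_nonneg (Nat.cast_nonneg _) (hinner k (mem_Ioo.2 ⟨hak, hk.2⟩))

theorem mul_sqrt_div_sqrt_le {G T N c S x : ℝ} (hc : 0 < c) (hx : 0 ≤ x)
    (hT : G ^ 2 * T ^ 2 ≤ N * x ^ 2) (hN : N * c ≤ S ^ 2 + c) :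
    G * T * √c / √(S ^ 2 + c) ≤ x := by
  have hSc : 0 < S ^ 2 + c := by positivity
  refine (le_abs_self _).trans (abs_le_of_sq_le_sq ?_ hx)
  rw [div_pow, mul_pow, Real.sq_sqrt hc.le, Real.sq_sqrt hSc.le, div_le_iff₀ hSc, mul_pow]
  nlinarith [sq_nonneg x]

theorem mul_le_sq_add_of_switching_costs {F : Type*} [SeminormedAddCommGroup F] (w : ℕ → F)
    {l : ℕ → ℕ} {N T : ℕ} {c S : ℝ} (hS : 0 < S) (hN : 1 ≤ N) (hl : MonotoneOn l (Set.Icc 1 N))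
    (hl1 : l 1 = 1) (hlN : l N ≤ T)
    (hsw : ∀ τ ∈ Icc 1 (N - 1), c / S < ∑ j ∈ Icc (l τ + 1) (l (τ + 1)), ‖w j - w (j - 1)‖)
    (htotal : ∑ t ∈ Icc 2 T, ‖w t - w (t - 1)‖ ≤ S) :
    (N : ℝ) * c ≤ S ^ 2 + c := by
  have hcost : #(Ico 1 N) • (c / S) ≤ S := calc
    #(Ico 1 N) • (c / S)
      ≤ ∑ τ ∈ Ico 1 N, ∑ j ∈ Ico (l τ + 1) (l (τ + 1) + 1), ‖w j - w (j - 1)‖ :=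
        card_nsmul_le_sum _ _ _ fun τ hτ => by
          rw [Ico_add_one_right_eq_Icc]
          exact (hsw τ (by simp at hτ ⊢; omega)).le
    _ = ∑ j ∈ Ico (l 1 + 1) (l N + 1), ‖w j - w (j - 1)‖ :=
        sum_sum_Ico_of_monotoneOn _ hN (hl.add_const 1)
    _ ≤ ∑ t ∈ Icc 2 T, ‖w t - w (t - 1)‖ :=
        sum_le_sum_of_subset_of_nonneg (fun j hj => by simp [hl1] at hj ⊢; omega)
          fun _ _ _ => norm_nonneg _
    _ ≤ S := htotal
  rw [Nat.card_Ico, nsmul_eq_mul, Nat.cast_sub hN, mul_div_assoc', div_le_iff₀ hS] at hcost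
  push_cast at hcost
  nlinarith

theorem stmt4_general (d T N : ℕ) (hN : 1 ≤ N)
    (w m : ℕ → EuclideanSpace ℝ (Fin d)) (G c S : ℝ) (hc : 0 < c) (hS : 0 < S)
    (l : ℕ → ℕ) (hl1 : l 1 = 1) (hlmono : ∀ τ, 1 ≤ τ → τ < N → l τ < l (τ + 1))
    (hlN : l N ≤ T) (hlN1 : l (N + 1) = T + 1)
    (hnorm : ∀ t ∈ Finset.Icc 1 T, ‖m t‖ = G)
    (hconst : ∀ τ ∈ Finset.Icc 1 N, ∀ t, l τ ≤ t → t < l (τ + 1) → m t = m (l τ))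
    (horth : ∀ τ ∈ Finset.Icc 2 N, 0 ≤ ⟪m (l τ), ∑ j ∈ Finset.Icc 1 (l τ - 1), m j⟫_ℝ)
    (hsw : ∀ τ ∈ Finset.Icc 1 (N - 1),
      c / S < ∑ j ∈ Finset.Icc (l τ + 1) (l (τ + 1)), ‖w j - w (j - 1)‖)
    (htotal : ∑ t ∈ Finset.Icc 2 T, ‖w t - w (t - 1)‖ ≤ S) :
    ‖∑ t ∈ Finset.Icc 1 T, m t‖ ≥ G * T * Real.sqrt c / Real.sqrt (S ^ 2 + c) := by
  have hmono : MonotoneOn l (Set.Icc 1 (N + 1)) :=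
    monotoneOn_of_le_add_one Set.ordConnected_Icc fun τ _ hτ hτ' => by
      obtain hlt | rfl := lt_or_eq_of_le (Nat.le_of_lt_succ hτ'.2)
      · exact (hlmono τ hτ.1 hlt).le
      · omega
  have hrounds : Icc 1 T = Ico (l 1) (l (N + 1)) := by
    rw [hl1, hlN1, Ico_add_one_right_eq_Icc]
  rw [hrounds] at hnorm ⊢
  have hgrowth := sq_mul_sum_sq_le_norm_sum_sq_of_epochs m l (by omega) hmono hnorm
    (fun τ hτ t ht => hconst τ (by simpa [Nat.lt_succ_iff] using hτ) t
      (mem_Ico.1 ht).1 (mem_Ico.1 ht).2)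
    fun τ hτ => by
      convert horth τ (by simp at hτ ⊢; omega) using 3
      ext; simp [hl1]; omega
  have hlength : ∑ τ ∈ Ico 1 (N + 1), ((l (τ + 1) - l τ : ℕ) : ℝ) = T := by
    simpa [hl1, hlN1] using sum_sum_Ico_of_monotoneOn (fun _ => (1 : ℝ)) (by omega) hmono
  have hCS := sq_sum_le_card_mul_sum_sq (s := Ico 1 (N + 1))
    (f := fun τ => ((l (τ + 1) - l τ : ℕ) : ℝ))
  rw [hlength, Nat.card_Ico, Nat.add_sub_cancel] at hCS
  have hcount := mul_le_sq_add_of_switching_costs w hS hN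
    (hmono.mono (Set.Icc_subset_Icc_right N.le_succ)) hl1 hlN hsw htotal
  refine mul_sqrt_div_sqrt_le hc (norm_nonneg _) ?_ hcount
  linarith [mul_le_mul_of_nonneg_left hCS (sq_nonneg G),
    mul_le_mul_of_nonneg_left hgrowth (Nat.cast_nonneg (α := ℝ) N)]

/-- **Lemma 2.** If the rounds `1, …, T` are partitioned into `N` consecutive
epochs with start indices `1 = l 1 < l 2 < ⋯ < l N ≤ T` (with `l (N+1) = T + 1`) such that
(i) `‖m t‖ = G`, (ii) `m` is constant on each epoch, (iii) `⟪m (l τ), ∑_{j=1}^{l τ − 1} m j⟫ ≥ 0`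
for `τ = 2, …, N`, (iv) each of the first `N − 1` epochs accumulates switching cost more than
`c / S` (through its closing round), and (v) the total switching cost is at most `S`, then
`‖∑_{t=1}^T m t‖ ≥ G·T·√c / √(S² + c)`. -/
theorem stmt4 (d T N : ℕ) (hT : 1 ≤ T) (hN : 1 ≤ N)
    (w m : ℕ → EuclideanSpace ℝ (Fin d)) (G c S : ℝ) (hG : 0 < G) (hc : 0 < c) (hS : 0 < S)
    (l : ℕ → ℕ) (hl1 : l 1 = 1) (hlmono : ∀ τ, 1 ≤ τ → τ < N → l τ < l (τ + 1))
    (hlN : l N ≤ T) (hlN1 : l (N + 1) = T + 1)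
    (hnorm : ∀ t ∈ Finset.Icc 1 T, ‖m t‖ = G)
    (hconst : ∀ τ ∈ Finset.Icc 1 N, ∀ t, l τ ≤ t → t < l (τ + 1) → m t = m (l τ))
    (horth : ∀ τ ∈ Finset.Icc 2 N, 0 ≤ ⟪m (l τ), ∑ j ∈ Finset.Icc 1 (l τ - 1), m j⟫_ℝ)
    (hsw : ∀ τ ∈ Finset.Icc 1 (N - 1),
      c / S < ∑ j ∈ Finset.Icc (l τ + 1) (l (τ + 1)), ‖w j - w (j - 1)‖)
    (htotal : ∑ t ∈ Finset.Icc 2 T, ‖w t - w (t - 1)‖ ≤ S) :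
    ‖∑ t ∈ Finset.Icc 1 T, m t‖ ≥ G * T * Real.sqrt c / Real.sqrt (S ^ 2 + c) :=
  stmt4_general d T N hN w m G c S hc hS l hl1 hlmono hlN hlN1 hnorm hconst horth hsw htotal
end

section
/- Let T ≥ 1, let m_1, …, m_T be vectors in ℝ^d, let G > 0, and suppose the rounds {1, …, T} are partitioned into N consecutive epochs with start indices 1 = l_1 < l_2 < ⋯ < l_N ≤ T (setting l_{N+1} = T + 1) and lengths L_τ = l_{τ+1} − l_τ, such that: (i) ‖m_t‖ = G for all t; (ii) m_t = m_{l_τ} for every t with l_τ ≤ t < l_{τ+1}; and (iii) ⟨m_{l_τ}, Σ_{j=1}^{l_τ−1} m_j⟩ ≥ 0 for every τ = 2, …, N. Then ‖Σ_{t=1}^T m_t‖² ≥ G² · Σ_{τ=1}^N L_τ². -/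
open scoped InnerProductSpace BigOperators

/-- If the rounds `1, …, T` are partitioned into `N` consecutive epochs with
start indices `1 = l 1 < l 2 < ⋯ < l N ≤ T` (with `l (N+1) = T + 1`) and lengths
`L τ = l (τ+1) − l τ`, such that (i) `‖m t‖ = G`, (ii) `m` is constant on each epoch, and
(iii) `⟪m (l τ), ∑_{j=1}^{l τ − 1} m j⟫ ≥ 0` for `τ = 2, …, N`, then
`‖∑_{t=1}^T m t‖² ≥ G² · ∑_{τ=1}^N L τ²`. -/
theorem stmt5 (d T N : ℕ) (hT : 1 ≤ T) (hN : 1 ≤ N)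
    (m : ℕ → EuclideanSpace ℝ (Fin d)) (G : ℝ) (hG : 0 < G)
    (l : ℕ → ℕ) (hl1 : l 1 = 1) (hlmono : ∀ τ, 1 ≤ τ → τ < N → l τ < l (τ + 1))
    (hlN : l N ≤ T) (hlN1 : l (N + 1) = T + 1)
    (hnorm : ∀ t ∈ Finset.Icc 1 T, ‖m t‖ = G)
    (hconst : ∀ τ ∈ Finset.Icc 1 N, ∀ t, l τ ≤ t → t < l (τ + 1) → m t = m (l τ))
    (horth : ∀ τ ∈ Finset.Icc 2 N, 0 ≤ ⟪m (l τ), ∑ j ∈ Finset.Icc 1 (l τ - 1), m j⟫_ℝ) :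
    ‖∑ t ∈ Finset.Icc 1 T, m t‖ ^ 2 ≥
      G ^ 2 * ∑ τ ∈ Finset.Icc 1 N, ((l (τ + 1) - l τ : ℕ) : ℝ) ^ 2 := by
  -- step property: l τ < l (τ+1) for 1 ≤ τ ≤ N
  have hstep : ∀ τ, 1 ≤ τ → τ ≤ N → l τ < l (τ + 1) := by
    intro τ h1 h2
    rcases lt_or_eq_of_le h2 with h | h
    · exact hlmono τ h1 h
    · subst h; omega
  -- l is ≥ 1 on [1, N+1]
  have hge1 : ∀ τ, 1 ≤ τ → τ ≤ N + 1 → 1 ≤ l τ := by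
    intro τ h1 h2
    induction τ with
    | zero => omega
    | succ k ih =>
      rcases Nat.eq_or_lt_of_le h1 with h | h
      · rw [← h, hl1]
      · have hk1 : 1 ≤ k := by omega
        have := hstep k hk1 (by omega)
        have := ih hk1 (by omega)
        omega
  -- l τ ≤ T for τ ∈ [1, N]
  have hleT : ∀ τ, 1 ≤ τ → τ ≤ N → l τ ≤ T := by
    intro τ h1 h2
    have : l τ < l (N + 1) := by
      have hmono : ∀ a, 1 ≤ a → ∀ k, a + k ≤ N + 1 → l a ≤ l (a + k) := by
        intro a ha k
        induction k with
        | zero => simp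
        | succ j ih =>
          intro h
          have h1' := ih (by omega)
          have h2' : l (a + j) < l (a + (j + 1)) := by
            rw [show a + (j + 1) = (a + j) + 1 by omega]
            exact hstep (a + j) (by omega) (by omega)
          omega
      have h3 : l τ < l (τ + 1) := hstep τ h1 h2
      have h4 := hmono (τ + 1) (by omega) (N - τ) (by omega)
      rw [show τ + 1 + (N - τ) = N + 1 by omega] at h4
      omega
    omega
  -- norm of m at epoch starts
  have hnormstart : ∀ τ, 1 ≤ τ → τ ≤ N → ‖m (l τ)‖ = G := fun τ h1 h2 =>
    hnorm _ (Finset.mem_Icc.mpr ⟨hge1 τ h1 (by omega), hleT τ h1 h2⟩)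
  -- epoch sum
  have hepoch : ∀ τ, 1 ≤ τ → τ ≤ N →
      ∑ t ∈ Finset.Icc (l τ) (l (τ + 1) - 1), m t
        = ((l (τ + 1) - l τ : ℕ) : ℝ) • m (l τ) := by
    intro τ h1 h2
    have hcard : l (τ + 1) - 1 + 1 - l τ = l (τ + 1) - l τ := by
      have := hstep τ h1 h2
      have := hge1 (τ + 1) (by omega) (by omega)
      omega
    calc ∑ t ∈ Finset.Icc (l τ) (l (τ + 1) - 1), m t
        = ∑ _t ∈ Finset.Icc (l τ) (l (τ + 1) - 1), m (l τ) := by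
          refine Finset.sum_congr rfl fun t ht => ?_
          rw [Finset.mem_Icc] at ht
          exact hconst τ (Finset.mem_Icc.mpr ⟨h1, h2⟩) t ht.1 (by
            have := hstep τ h1 h2; omega)
      _ = (l (τ + 1) - l τ) • m (l τ) := by
          rw [Finset.sum_const, Nat.card_Icc, hcard]
      _ = ((l (τ + 1) - l τ : ℕ) : ℝ) • m (l τ) := (Nat.cast_smul_eq_nsmul ℝ _ _).symm
  -- main induction
  have main : ∀ τ, 1 ≤ τ → τ ≤ N →
      ‖∑ t ∈ Finset.Icc 1 (l (τ + 1) - 1), m t‖ ^ 2 ≥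
        G ^ 2 * ∑ σ ∈ Finset.Icc 1 τ, ((l (σ + 1) - l σ : ℕ) : ℝ) ^ 2 := by
    intro τ h1
    induction τ, h1 using Nat.le_induction with
    | base =>
      intro _
      have he := hepoch 1 le_rfl hN
      rw [hl1] at he
      have hm1 : ‖m 1‖ = G := by rw [← hl1]; exact hnormstart 1 le_rfl hN
      rw [he, Finset.Icc_self, Finset.sum_singleton]
      rw [norm_smul, mul_pow, hm1, hl1, Real.norm_eq_abs, sq_abs]
      apply le_of_eq
      ring
    | succ τ hτ ih =>
      intro hτ1N
      have hτN : τ ≤ N := by omega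
      have ih' := ih hτN
      -- split the sum
      have hs1 := hstep τ (by omega) hτN
      have hs2 : l (τ + 1) < l (τ + 2) := hstep (τ + 1) (by omega) hτ1N
      have hg1 := hge1 (τ + 1) (by omega) (by omega)
      have hg2 := hge1 (τ + 2) (by omega) (by omega)
      have hsplit : ∑ t ∈ Finset.Icc 1 (l (τ + 2) - 1), m t
          = (∑ t ∈ Finset.Icc 1 (l (τ + 1) - 1), m t)
            + ∑ t ∈ Finset.Icc (l (τ + 1)) (l (τ + 2) - 1), m t := by
        have h1eq : Finset.Icc 1 (l (τ + 2) - 1) = Finset.Ioc 0 (l (τ + 2) - 1) := by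
          ext x; simp only [Finset.mem_Icc, Finset.mem_Ioc]; omega
        have h2eq : Finset.Icc 1 (l (τ + 1) - 1) = Finset.Ioc 0 (l (τ + 1) - 1) := by
          ext x; simp only [Finset.mem_Icc, Finset.mem_Ioc]; omega
        have h3eq : Finset.Icc (l (τ + 1)) (l (τ + 2) - 1)
            = Finset.Ioc (l (τ + 1) - 1) (l (τ + 2) - 1) := by
          ext x; simp only [Finset.mem_Icc, Finset.mem_Ioc]; omega
        rw [h1eq, h2eq, h3eq]
        exact (Finset.sum_Ioc_consecutive _ (by omega) (by omega)).symm
      rw [hsplit, hepoch (τ + 1) (by omega) hτ1N]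
      set A := ∑ t ∈ Finset.Icc 1 (l (τ + 1) - 1), m t with hA
      set c : ℝ := ((l (τ + 2) - l (τ + 1) : ℕ) : ℝ) with hc
      have hc0 : 0 ≤ c := Nat.cast_nonneg _
      have hexp : ‖A + c • m (l (τ + 1))‖ ^ 2
          = ‖A‖ ^ 2 + 2 * ⟪A, c • m (l (τ + 1))⟫_ℝ + ‖c • m (l (τ + 1))‖ ^ 2 :=
        norm_add_sq_real A _
      have hinner : ⟪A, c • m (l (τ + 1))⟫_ℝ
          = c * ⟪m (l (τ + 1)), A⟫_ℝ := by
        rw [real_inner_smul_right, real_inner_comm]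
      have hI : 0 ≤ ⟪m (l (τ + 1)), A⟫_ℝ :=
        horth (τ + 1) (Finset.mem_Icc.mpr ⟨by omega, hτ1N⟩)
      have hnB : ‖c • m (l (τ + 1))‖ ^ 2 = c ^ 2 * G ^ 2 := by
        rw [norm_smul, mul_pow, hnormstart (τ + 1) (by omega) hτ1N,
          Real.norm_eq_abs, sq_abs]
      rw [Finset.sum_Icc_succ_top (by omega : 1 ≤ τ + 1)]
      rw [hexp, hinner, hnB]
      have : G ^ 2 * (∑ σ ∈ Finset.Icc 1 τ, ((l (σ + 1) - l σ : ℕ) : ℝ) ^ 2)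
          ≤ ‖A‖ ^ 2 := ih'
      nlinarith [mul_nonneg hc0 hI]
  have h := main N hN le_rfl
  rw [hlN1] at h
  simpa using h
end
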